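/- arXiv:2406.13036 — 2 statements merged into one kernel-verified Lean document; each statement's English description precedes it below -/
import Mathlib

section
/- Gaussian logarithmic Sobolev inequality with reverse bound in one dimension: for the standard Gaussian measure μ = N(0,1) on R and any smooth positive function f with ∫f dμ = 1, one has (1/2)(∫ f' dμ)² ≤ ∫ f ln f dμ ≤ (1/2) ∫ (f')²/f dμ. -/
open MeasureTheory ProbabilityTheory Real Filter Topology Set
open scoped NNReal ENNReal

namespace GLSI

noncomputable def phi (x : ℝ) : ℝ := (Real.sqrt (2*Real.pi))⁻¹ * Real.exp (-x^2/2)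

lemma phi_eq_pdf : phi = gaussianPDFReal 0 1 := by
  ext x; simp [phi, gaussianPDFReal, neg_div]

lemma phi_pos (x : ℝ) : 0 < phi x := by
  have := Real.pi_pos
  unfold phi; positivity

lemma continuous_phi : Continuous phi := by
  unfold phi; fun_prop

lemma integrable_phi : Integrable phi := by
  rw [phi_eq_pdf]; exact integrable_gaussianPDFReal 0 1

lemma integral_phi : ∫ x, phi x = 1 := by
  rw [phi_eq_pdf]; exact integral_gaussianPDFReal_eq_one 0 one_ne_zero

lemma hasDerivAt_phi (x : ℝ) : HasDerivAt phi (-x * phi x) x := by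
  unfold phi
  have h1 : HasDerivAt (fun x : ℝ => -x^2/2) (-x) x := by
    have := ((hasDerivAt_pow 2 x).neg).div_const 2
    simpa using this.congr_deriv (by ring)
  have h2 := (h1.exp).const_mul (Real.sqrt (2*Real.pi))⁻¹
  exact h2.congr_deriv (by ring)

lemma measure_eq : gaussianReal 0 1 = volume.withDensity (fun x => ((phi x).toNNReal : ENNReal)) := by
  rw [gaussianReal_of_var_ne_zero _ one_ne_zero]
  congr 1; ext x
  rw [gaussianPDF, ← phi_eq_pdf]; rfl

lemma integral_mu_eq (g : ℝ → ℝ) : ∫ x, g x ∂(gaussianReal 0 1) = ∫ x, g x * phi x := by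
  rw [measure_eq, integral_withDensity_eq_integral_smul]
  · congr 1; ext x
    rw [NNReal.smul_def, Real.coe_toNNReal _ (phi_pos x).le, smul_eq_mul, mul_comm]
  · exact (continuous_phi.measurable).real_toNNReal

lemma integrable_mu_iff (g : ℝ → ℝ) :
    Integrable g (gaussianReal 0 1) ↔ Integrable (fun x => g x * phi x) := by
  rw [measure_eq, integrable_withDensity_iff_integrable_smul
    ((continuous_phi.measurable).real_toNNReal)]
  have : (fun x => ((phi x).toNNReal : ℝ≥0) • g x) = fun x => g x * phi x := by
    ext x
    rw [NNReal.smul_def, Real.coe_toNNReal _ (phi_pos x).le, smul_eq_mul, mul_comm]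
  rw [this]

/-- translated density -/
lemma exp_mul_phi (t x : ℝ) : Real.exp (t*x - t^2/2) * phi x = phi (x - t) := by
  unfold phi
  rw [mul_left_comm, ← Real.exp_add]
  congr 2; ring

lemma integrable_exp_mul_phi (t : ℝ) : Integrable (fun x => Real.exp (t*x - t^2/2) * phi x) := by
  simp_rw [exp_mul_phi]
  exact integrable_phi.comp_sub_right t

lemma integral_exp_mul_phi (t : ℝ) : ∫ x, Real.exp (t*x - t^2/2) * phi x = 1 := by
  simp_rw [exp_mul_phi]
  rw [integral_sub_right_eq_self phi t, integral_phi]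

/-- Young's inequality for entropy: `u * y ≤ u * log u + exp y - u` for `u > 0`. -/
lemma young {u : ℝ} (hu : 0 < u) (y : ℝ) : u * y ≤ u * Real.log u + Real.exp y - u := by
  have h := Real.add_one_le_exp (y - Real.log u)
  have h2 : Real.exp (y - Real.log u) = Real.exp y / u := by
    rw [Real.exp_sub, Real.exp_log hu]
  have h3 : u * (Real.exp y / u) = Real.exp y := by field_simp
  nlinarith [mul_le_mul_of_nonneg_left h hu.le]

lemma integrable_sq_mul_phi : Integrable (fun x => x^2 * phi x) := by
  have h4 : Integrable (fun x : ℝ => ((Real.sqrt (2*Real.pi))⁻¹ * 4) * Real.exp (-(1/4) * x^2)) :=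
    (integrable_exp_neg_mul_sq (by norm_num)).const_mul _
  refine h4.mono' ((continuous_pow 2).mul continuous_phi).aestronglyMeasurable
    (Eventually.of_forall fun x => ?_)
  have hx : x^2 ≤ 4 * Real.exp (x^2/4) := by
    have := Real.add_one_le_exp (x^2/4)
    nlinarith [sq_nonneg x]
  have hphi : 0 < (Real.sqrt (2*Real.pi))⁻¹ := by have := Real.pi_pos; positivity
  rw [Real.norm_eq_abs, abs_of_nonneg (mul_nonneg (sq_nonneg x) (phi_pos x).le)]
  unfold phi
  calc x^2 * ((Real.sqrt (2*Real.pi))⁻¹ * Real.exp (-x^2/2))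
      ≤ (4 * Real.exp (x^2/4)) * ((Real.sqrt (2*Real.pi))⁻¹ * Real.exp (-x^2/2)) := by
        apply mul_le_mul_of_nonneg_right hx (by positivity)
    _ = ((Real.sqrt (2*Real.pi))⁻¹ * 4) * Real.exp (-(1/4) * x^2) := by
        rw [mul_left_comm, mul_assoc (4:ℝ), ← Real.exp_add]
        ring_nf


lemma not_ge_on_Ici {g : ℝ → ℝ} (hi : Integrable g) {c : ℝ} (hc : 0 < c) (N : ℝ)
    (h : ∀ x ∈ Ici N, c ≤ g x) : False := by
  have hint : Integrable (fun _ : ℝ => c) (volume.restrict (Ici N)) := by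
    refine (hi.restrict (s := Ici N)).mono' aestronglyMeasurable_const ?_
    rw [ae_restrict_iff' measurableSet_Ici]
    exact ae_of_all _ fun x hx => by
      rw [Real.norm_eq_abs, abs_of_pos hc]; exact h x hx
  rw [integrable_const_iff] at hint
  rcases hint with h' | h'
  · exact hc.ne' h'
  · have h'' := h'.measure_univ_lt_top
    simp [Measure.restrict_apply_univ, Real.volume_Ici] at h''

lemma not_ge_on_Iic {g : ℝ → ℝ} (hi : Integrable g) {c : ℝ} (hc : 0 < c) (N : ℝ)
    (h : ∀ x ∈ Iic N, c ≤ g x) : False := by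
  have hint : Integrable (fun _ : ℝ => c) (volume.restrict (Iic N)) := by
    refine (hi.restrict (s := Iic N)).mono' aestronglyMeasurable_const ?_
    rw [ae_restrict_iff' measurableSet_Iic]
    exact ae_of_all _ fun x hx => by
      rw [Real.norm_eq_abs, abs_of_pos hc]; exact h x hx
  rw [integrable_const_iff] at hint
  rcases hint with h' | h'
  · exact hc.ne' h'
  · have h'' := h'.measure_univ_lt_top
    simp [Measure.restrict_apply_univ, Real.volume_Iic] at h''

lemma exists_seq_tendsto_atTop {h : ℝ → ℝ} (hnn : ∀ x, 0 ≤ h x) (hi : Integrable h) :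
    ∃ b : ℕ → ℝ, Tendsto b atTop atTop ∧ Tendsto (fun n => h (b n)) atTop (𝓝 0) := by
  have key : ∀ n : ℕ, ∃ x, (n : ℝ) ≤ x ∧ h x < 1/(n+1 : ℝ) := by
    intro n
    by_contra hcon
    push_neg at hcon
    exact not_ge_on_Ici hi (show (0:ℝ) < 1/(n+1) by positivity) n
      (fun x hx => hcon x hx)
  choose b hb1 hb2 using key
  refine ⟨b, tendsto_atTop_mono hb1 tendsto_natCast_atTop_atTop, ?_⟩
  have hsq : Tendsto (fun n : ℕ => 1/(n+1 : ℝ)) atTop (𝓝 0) :=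
    tendsto_one_div_add_atTop_nhds_zero_nat
  exact squeeze_zero (fun n => hnn (b n)) (fun n => (hb2 n).le) hsq

lemma exists_seq_tendsto_atBot {h : ℝ → ℝ} (hnn : ∀ x, 0 ≤ h x) (hi : Integrable h) :
    ∃ a : ℕ → ℝ, Tendsto a atTop atBot ∧ Tendsto (fun n => h (a n)) atTop (𝓝 0) := by
  have key : ∀ n : ℕ, ∃ x, x ≤ -(n : ℝ) ∧ h x < 1/(n+1 : ℝ) := by
    intro n
    by_contra hcon
    push_neg at hcon
    exact not_ge_on_Iic hi (show (0:ℝ) < 1/(n+1) by positivity) (-n)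
      (fun x hx => hcon x hx)
  choose a ha1 ha2 using key
  refine ⟨a, tendsto_atBot_mono ha1
    (tendsto_neg_atTop_atBot.comp tendsto_natCast_atTop_atTop), ?_⟩
  have hsq : Tendsto (fun n : ℕ => 1/(n+1 : ℝ)) atTop (𝓝 0) :=
      tendsto_one_div_add_atTop_nhds_zero_nat
  exact squeeze_zero (fun n => hnn (a n)) (fun n => (ha2 n).le) hsq

lemma limit_zero_of_integrable_atTop {g : ℝ → ℝ} (hi : Integrable g) {L : ℝ}
    (hL : Tendsto g atTop (𝓝 L)) : L = 0 := by
  by_contra hL0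
  have habs : Tendsto (fun x => |g x|) atTop (𝓝 |L|) := hL.abs
  have hc : 0 < |L| / 2 := by positivity
  have hev : ∀ᶠ x in atTop, |L|/2 ≤ |g x| := habs.eventually (le_mem_nhds (by linarith [abs_pos.mpr hL0]))
  obtain ⟨N, hN⟩ := eventually_atTop.mp hev
  exact not_ge_on_Ici hi.abs hc N fun x hx => hN x hx

lemma limit_zero_of_integrable_atBot {g : ℝ → ℝ} (hi : Integrable g) {L : ℝ}
    (hL : Tendsto g atBot (𝓝 L)) : L = 0 := by
  by_contra hL0
  have habs : Tendsto (fun x => |g x|) atBot (𝓝 |L|) := hL.abs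
  have hc : 0 < |L| / 2 := by positivity
  have hev : ∀ᶠ x in atBot, |L|/2 ≤ |g x| := habs.eventually (le_mem_nhds (by linarith [abs_pos.mpr hL0]))
  obtain ⟨N, hN⟩ := eventually_atBot.mp hev
  exact not_ge_on_Iic hi.abs hc N fun x hx => hN x hx


noncomputable def cdf (g : ℝ → ℝ) (x : ℝ) : ℝ := ∫ t in Iic x, g t

lemma cdf_repr {g : ℝ → ℝ} (hi : Integrable g) :
    cdf g = fun y => cdf g 0 + ∫ t in (0:ℝ)..y, g t := by
  ext y
  rw [← intervalIntegral.integral_Iic_sub_Iic hi.integrableOn hi.integrableOn]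
  simp only [cdf]; ring

lemma hasDerivAt_cdf {g : ℝ → ℝ} (hc : Continuous g) (hi : Integrable g) (x : ℝ) :
    HasDerivAt (cdf g) (g x) x := by
  rw [cdf_repr hi]
  exact (intervalIntegral.integral_hasDerivAt_right hi.intervalIntegrable
    (hc.stronglyMeasurableAtFilter _ _) hc.continuousAt).const_add _

lemma strictMono_cdf {g : ℝ → ℝ} (hc : Continuous g) (hpos : ∀ x, 0 < g x)
    (hi : Integrable g) : StrictMono (cdf g) := by
  refine strictMono_of_deriv_pos fun x => ?_
  rw [(hasDerivAt_cdf hc hi x).deriv]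
  exact hpos x

lemma continuous_cdf {g : ℝ → ℝ} (hc : Continuous g) (hi : Integrable g) :
    Continuous (cdf g) := by
  have : Differentiable ℝ (cdf g) := fun x => (hasDerivAt_cdf hc hi x).differentiableAt
  exact this.continuous

lemma tendsto_cdf_atTop {g : ℝ → ℝ} (hi : Integrable g) (h1 : ∫ x, g x = 1) :
    Tendsto (cdf g) atTop (𝓝 1) := by
  rw [cdf_repr hi]
  have h2 : Tendsto (fun y : ℝ => ∫ t in (0:ℝ)..y, g t) atTop (𝓝 (∫ t in Ioi (0:ℝ), g t)) :=
    intervalIntegral_tendsto_integral_Ioi 0 hi.integrableOn tendsto_id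
  have h3 : cdf g 0 + ∫ t in Ioi (0:ℝ), g t = 1 := by
    simp only [cdf]
    rw [intervalIntegral.integral_Iic_add_Ioi hi.integrableOn hi.integrableOn, h1]
  have h5 := (tendsto_const_nhds (x := cdf g 0) (f := atTop (α := ℝ))).add h2
  rw [h3] at h5; exact h5

lemma tendsto_cdf_atBot {g : ℝ → ℝ} (hi : Integrable g) :
    Tendsto (cdf g) atBot (𝓝 0) := by
  have h2 : Tendsto (fun y : ℝ => ∫ t in y..(0:ℝ), g t) atBot (𝓝 (∫ t in Iic (0:ℝ), g t)) :=
    intervalIntegral_tendsto_integral_Iic 0 hi.integrableOn tendsto_id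
  have h5 := (tendsto_const_nhds (x := cdf g 0) (f := atBot (α := ℝ))).add h2.neg
  rw [show cdf g 0 + -∫ t in Iic (0:ℝ), g t = 0 by simp only [cdf]; ring] at h5
  rw [cdf_repr hi]
  refine h5.congr fun y => ?_
  rw [← intervalIntegral.integral_symm]

lemma cdf_pos {g : ℝ → ℝ} (hc : Continuous g) (hpos : ∀ x, 0 < g x) (hi : Integrable g)
    (x : ℝ) : 0 < cdf g x := by
  have h1 : cdf g (x - 1) < cdf g x := strictMono_cdf hc hpos hi (by linarith)
  have h2 : 0 ≤ cdf g (x - 1) := setIntegral_nonneg measurableSet_Iic fun t _ => (hpos t).le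
  linarith

lemma cdf_lt_one {g : ℝ → ℝ} (hc : Continuous g) (hpos : ∀ x, 0 < g x) (hi : Integrable g)
    (h1 : ∫ x, g x = 1) (x : ℝ) : cdf g x < 1 := by
  have h2 : cdf g x < cdf g (x + 1) := strictMono_cdf hc hpos hi (by linarith)
  have h3 : cdf g (x + 1) ≤ 1 :=
    (strictMono_cdf hc hpos hi).monotone.ge_of_tendsto (tendsto_cdf_atTop hi h1) _
  linarith

lemma exists_cdf_eq {g : ℝ → ℝ} (hc : Continuous g) (hpos : ∀ x, 0 < g x) (hi : Integrable g)
    (h1 : ∫ x, g x = 1) {p : ℝ} (hp : p ∈ Ioo (0:ℝ) 1) : ∃ y, cdf g y = p := by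
  obtain ⟨a, ha⟩ := ((tendsto_cdf_atBot hi).eventually (gt_mem_nhds hp.1)).exists
  obtain ⟨b, hb⟩ := ((tendsto_cdf_atTop hi h1).eventually (lt_mem_nhds hp.2)).exists
  have hab : a ≤ b := by
    by_contra hab
    exact absurd (strictMono_cdf hc hpos hi (lt_of_not_ge hab)) (by linarith)
  obtain ⟨y, _, hy⟩ := intermediate_value_Icc hab (continuous_cdf hc hi).continuousOn
    ⟨ha.le, hb.le⟩
  exact ⟨y, hy⟩

/-- Continuity of the inverse of a strictly monotone function. -/
lemma continuousAt_of_strictMono_inv {F G : ℝ → ℝ} (hF : StrictMono F) {p : ℝ} {s : Set ℝ}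
    (hs : s ∈ 𝓝 p) (hFG : ∀ q ∈ s, F (G q) = q) : ContinuousAt G p := by
  rw [Metric.continuousAt_iff]
  intro ε hε
  have hxp : F (G p) = p := hFG p (mem_of_mem_nhds hs)
  have h1 : F (G p - ε) < p := by
    have := hF (show G p - ε < G p by linarith); linarith [hxp ▸ this]
  have h2 : p < F (G p + ε) := by
    have := hF (show G p < G p + ε by linarith); linarith [hxp ▸ this]
  obtain ⟨δ₀, hδ₀, hball⟩ := Metric.mem_nhds_iff.mp hs
  refine ⟨min δ₀ (min (p - F (G p - ε)) (F (G p + ε) - p)),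
    lt_min hδ₀ (lt_min (by linarith) (by linarith)), fun {q} hq => ?_⟩
  rw [Real.dist_eq] at hq
  have hd1 := abs_lt.mp (lt_of_lt_of_le hq (le_trans (min_le_right _ _) (min_le_left _ _)))
  have hd2 := abs_lt.mp (lt_of_lt_of_le hq (le_trans (min_le_right _ _) (min_le_right _ _)))
  have hqs : q ∈ s := hball (by
    rw [Metric.mem_ball, Real.dist_eq]
    exact lt_of_lt_of_le hq (min_le_left _ _))
  have hq1 : F (G p - ε) < F (G q) := by rw [hFG q hqs]; linarith [hd1.1]
  have hq2 : F (G q) < F (G p + ε) := by rw [hFG q hqs]; linarith [hd2.2]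
  have l1 : G p - ε < G q := hF.lt_iff_lt.mp hq1
  have l2 : G q < G p + ε := hF.lt_iff_lt.mp hq2
  rw [Real.dist_eq, abs_lt]
  constructor <;> linarith


open scoped Classical in
noncomputable def Psi (p : ℝ) : ℝ :=
  if h : ∃ y, cdf phi y = p then h.choose else 0

lemma Psi_spec {p : ℝ} (hp : p ∈ Ioo (0:ℝ) 1) : cdf phi (Psi p) = p := by
  have h : ∃ y, cdf phi y = p := exists_cdf_eq continuous_phi phi_pos integrable_phi
    integral_phi hp
  rw [Psi, dif_pos h]
  exact h.choose_spec

lemma continuousAt_Psi {p : ℝ} (hp : p ∈ Ioo (0:ℝ) 1) : ContinuousAt Psi p :=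
  continuousAt_of_strictMono_inv (strictMono_cdf continuous_phi phi_pos integrable_phi)
    (isOpen_Ioo.mem_nhds hp) (fun q hq => Psi_spec hq)

lemma hasDerivAt_Psi {p : ℝ} (hp : p ∈ Ioo (0:ℝ) 1) :
    HasDerivAt Psi (phi (Psi p))⁻¹ p := by
  refine HasDerivAt.of_local_left_inverse (continuousAt_Psi hp)
    (hasDerivAt_cdf continuous_phi integrable_phi (Psi p)) (phi_pos _).ne' ?_
  filter_upwards [isOpen_Ioo.mem_nhds hp] with q hq
  exact Psi_spec hq


lemma young_phi {f : ℝ → ℝ} (hpos : ∀ x, 0 < f x) (t x : ℝ) :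
    f x * (t*x - t^2/2) * phi x ≤
      f x * Real.log (f x) * phi x + Real.exp (t*x - t^2/2) * phi x - f x * phi x := by
  have h := mul_le_mul_of_nonneg_right (young (hpos x) (t*x - t^2/2)) (phi_pos x).le
  nlinarith [h]

lemma lower_main {f : ℝ → ℝ} (hd : ∀ x, HasDerivAt f (deriv f x) x)
    (hpos : ∀ x, 0 < f x)
    (h1 : Integrable (fun x => f x * phi x)) (hone : (∫ x, f x * phi x) = 1)
    (hent : Integrable (fun x => f x * Real.log (f x) * phi x))
    (hderiv : Integrable (fun x => deriv f x * phi x)) :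
    Integrable (fun x => x * (f x * phi x)) ∧
    (∫ x, deriv f x * phi x) = (∫ x, x * (f x * phi x)) ∧
    1/2 * (∫ x, deriv f x * phi x)^2 ≤ ∫ x, f x * Real.log (f x) * phi x := by
  have hdiff : Differentiable ℝ f := fun x => (hd x).differentiableAt
  have hcontf : Continuous f := hdiff.continuous
  -- step 1 : x * ρ is integrable
  have hxρ : Integrable (fun x => x * (f x * phi x)) := by
    have hB : Integrable (fun x => f x * Real.log (f x) * phi x
        + Real.exp (1*x - 1^2/2) * phi x + Real.exp ((-1)*x - (-1 : ℝ)^2/2) * phi x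
        + f x * phi x) :=
      ((hent.add (integrable_exp_mul_phi 1)).add (integrable_exp_mul_phi (-1))).add h1
    refine hB.mono' (continuous_id.mul (hcontf.mul continuous_phi)).aestronglyMeasurable
      (Eventually.of_forall fun x => ?_)
    rw [Real.norm_eq_abs]
    rcases abs_cases (x * (f x * phi x)) with ⟨he, _⟩ | ⟨he, _⟩ <;> rw [he] <;>
      nlinarith [young_phi hpos 1 x, young_phi hpos (-1) x,
        (mul_pos (Real.exp_pos (1*x - 1^2/2)) (phi_pos x)).le,
        (mul_pos (Real.exp_pos ((-1)*x - (-1:ℝ)^2/2)) (phi_pos x)).le,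
        (mul_pos (hpos x) (phi_pos x)).le]
  set ρ : ℝ → ℝ := fun x => f x * phi x with hρdef
  set ρ' : ℝ → ℝ := fun x => (deriv f x - x * f x) * phi x with hρ'def
  have hρd : ∀ x, HasDerivAt ρ (ρ' x) x := by
    intro x
    have := (hd x).mul (hasDerivAt_phi x)
    exact this.congr_deriv (by simp only [hρ'def]; ring)
  have hρ'int : Integrable ρ' := by
    have : Integrable (fun x => deriv f x * phi x - x * (f x * phi x)) := hderiv.sub hxρ
    refine this.congr (Eventually.of_forall fun x => ?_)
    simp only [hρ'def]; ring
  have hrepr : ∀ a b : ℝ, (∫ x in a..b, ρ' x) = ρ b - ρ a := fun a b =>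
    intervalIntegral.integral_eq_sub_of_hasDerivAt (fun x _ => hρd x)
      hρ'int.intervalIntegrable
  -- limits of ρ
  have hρtop : Tendsto ρ atTop (𝓝 0) := by
    have t1 : Tendsto (fun b : ℝ => ρ 0 + ∫ x in (0:ℝ)..b, ρ' x) atTop
        (𝓝 (ρ 0 + ∫ x in Ioi (0:ℝ), ρ' x)) :=
      tendsto_const_nhds.add (intervalIntegral_tendsto_integral_Ioi 0 hρ'int.integrableOn
        tendsto_id)
    have t2 : Tendsto ρ atTop (𝓝 (ρ 0 + ∫ x in Ioi (0:ℝ), ρ' x)) := by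
      refine t1.congr fun b => ?_
      rw [hrepr 0 b]; ring
    have h0 : ρ 0 + ∫ x in Ioi (0:ℝ), ρ' x = 0 := limit_zero_of_integrable_atTop h1 t2
    rwa [h0] at t2
  have hρbot : Tendsto ρ atBot (𝓝 0) := by
    have t1 : Tendsto (fun a : ℝ => ρ 0 - ∫ x in a..(0:ℝ), ρ' x) atBot
        (𝓝 (ρ 0 - ∫ x in Iic (0:ℝ), ρ' x)) :=
      tendsto_const_nhds.sub (intervalIntegral_tendsto_integral_Iic 0 hρ'int.integrableOn
        tendsto_id)
    have t2 : Tendsto ρ atBot (𝓝 (ρ 0 - ∫ x in Iic (0:ℝ), ρ' x)) := by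
      refine t1.congr fun a => ?_
      rw [hrepr a 0]; ring
    have h0 : ρ 0 - ∫ x in Iic (0:ℝ), ρ' x = 0 := limit_zero_of_integrable_atBot h1 t2
    rwa [h0] at t2
  -- integration by parts
  have hIBP : (∫ x, ρ' x) = 0 := by
    have t1 : Tendsto (fun n : ℕ => ∫ x in (-(n:ℝ))..(n:ℝ), ρ' x) atTop (𝓝 (∫ x, ρ' x)) :=
      intervalIntegral_tendsto_integral hρ'int
        (tendsto_neg_atTop_atBot.comp tendsto_natCast_atTop_atTop) tendsto_natCast_atTop_atTop
    have t2 : Tendsto (fun n : ℕ => ∫ x in (-(n:ℝ))..(n:ℝ), ρ' x) atTop (𝓝 0) := by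
      have := (hρtop.comp (tendsto_natCast_atTop_atTop (R := ℝ))).sub
        (hρbot.comp (tendsto_neg_atTop_atBot.comp (tendsto_natCast_atTop_atTop (R := ℝ))))
      rw [sub_zero] at this
      exact this.congr fun n => (hrepr _ _).symm
    exact tendsto_nhds_unique t1 t2
  have hm : (∫ x, deriv f x * phi x) = ∫ x, x * (f x * phi x) := by
    have h2 : (∫ x, (deriv f x * phi x - x * (f x * phi x))) = 0 := by
      rw [← hIBP]
      congr 1; ext x; simp only [hρ'def]; ring
    rw [integral_sub hderiv hxρ] at h2
    linarith
  refine ⟨hxρ, hm, ?_⟩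
  have hone' : (∫ x, f x * phi x) = 1 := hone
  have h1' : Integrable (fun x => f x * phi x) := h1
  set m : ℝ := ∫ x, deriv f x * phi x with hmdef
  have hL : Integrable (fun x => f x * (m*x - m^2/2) * phi x) := by
    have : Integrable (fun x => m * (x * (f x * phi x)) - m^2/2 * (f x * phi x)) :=
      (hxρ.const_mul m).sub (h1'.const_mul (m^2/2))
    exact this.congr (Eventually.of_forall fun x => by ring)
  have hAB : Integrable (fun x => f x * Real.log (f x) * phi x
      + Real.exp (m*x - m^2/2) * phi x) := hent.add (integrable_exp_mul_phi m)
  have hR : Integrable (fun x => f x * Real.log (f x) * phi x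
      + Real.exp (m*x - m^2/2) * phi x - f x * phi x) := hAB.sub h1'
  have hint := integral_mono hL hR (fun x => young_phi hpos m x)
  have eL : (∫ x, f x * (m*x - m^2/2) * phi x)
      = m * (∫ x, x * (f x * phi x)) - m^2/2 * ∫ x, f x * phi x := by
    have hsub : Integrable (fun x => m * (x * (f x * phi x)) - m^2/2 * (f x * phi x)) :=
      (hxρ.const_mul m).sub (h1'.const_mul (m^2/2))
    have e1 : (∫ x, f x * (m*x - m^2/2) * phi x)
        = ∫ x, (m * (x * (f x * phi x)) - m^2/2 * (f x * phi x)) :=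
      integral_congr_ae (Eventually.of_forall fun x => by ring)
    rw [e1, integral_sub (hxρ.const_mul m) (h1'.const_mul (m^2/2)),
      integral_const_mul, integral_const_mul]
  have eR : (∫ x, (f x * Real.log (f x) * phi x
      + Real.exp (m*x - m^2/2) * phi x - f x * phi x))
      = (∫ x, f x * Real.log (f x) * phi x) + 1 - 1 := by
    rw [integral_sub hAB h1', integral_add hent (integrable_exp_mul_phi m),
      integral_exp_mul_phi m, hone']
  rw [eL, eR, ← hm, hone'] at hint
  nlinarith [hint]

lemma log_phi (y : ℝ) : Real.log (phi y) = -Real.log (Real.sqrt (2*Real.pi)) - y^2/2 := by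
  have hs : (0:ℝ) < Real.sqrt (2*Real.pi) := by have := Real.pi_pos; positivity
  unfold phi
  rw [Real.log_mul (inv_ne_zero hs.ne') (Real.exp_ne_zero _), Real.log_inv, Real.log_exp]
  ring

lemma upper_main {f : ℝ → ℝ} (hd : ∀ x, HasDerivAt f (deriv f x) x)
    (hcontf' : Continuous (deriv f)) (hpos : ∀ x, 0 < f x)
    (h1 : Integrable (fun x => f x * phi x)) (hone : (∫ x, f x * phi x) = 1)
    (hent : Integrable (fun x => f x * Real.log (f x) * phi x))
    (hxρ : Integrable (fun x => x * (f x * phi x)))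
    (hfisher : Integrable (fun x => deriv f x ^ 2 / f x * phi x)) :
    (∫ x, f x * Real.log (f x) * phi x) ≤ 1/2 * ∫ x, deriv f x ^ 2 / f x * phi x := by
  have hdiff : Differentiable ℝ f := fun x => (hd x).differentiableAt
  have hcontf : Continuous f := hdiff.continuous
  have hρc : Continuous (fun x => f x * phi x) := hcontf.mul continuous_phi
  have hρpos : ∀ x, 0 < f x * phi x := fun x => mul_pos (hpos x) (phi_pos x)
  set F : ℝ → ℝ := cdf (fun x => f x * phi x) with hFdef
  have hFioo : ∀ x, F x ∈ Ioo (0:ℝ) 1 := fun x =>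
    ⟨cdf_pos hρc hρpos h1 x, cdf_lt_one hρc hρpos h1 hone x⟩
  set T : ℝ → ℝ := fun x => Psi (F x) with hTdef
  have hΦT : ∀ x, cdf phi (T x) = F x := fun x => Psi_spec (hFioo x)
  set T' : ℝ → ℝ := fun x => (phi (T x))⁻¹ * (f x * phi x) with hT'def
  have hTd : ∀ x, HasDerivAt T (T' x) x := fun x =>
    (hasDerivAt_Psi (hFioo x)).comp x (hasDerivAt_cdf hρc h1 x)
  have hT'pos : ∀ x, 0 < T' x := fun x =>
    mul_pos (inv_pos.mpr (phi_pos _)) (hρpos x)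
  have hTcont : Continuous T := by
    rw [continuous_iff_continuousAt]
    exact fun x => (continuousAt_Psi (hFioo x)).comp (continuous_cdf hρc h1).continuousAt
  have hT'cont : Continuous T' := by
    exact ((continuous_phi.comp hTcont).inv₀ (fun x => (phi_pos (T x)).ne')).mul hρc
  have hMA : ∀ x, phi (T x) * T' x = f x * phi x := fun x => by
    show phi (T x) * ((phi (T x))⁻¹ * (f x * phi x)) = f x * phi x
    rw [← mul_assoc, mul_inv_cancel₀ (phi_pos _).ne', one_mul]
  have hTmono : Monotone T := fun u v huv => by
    have h2 : cdf phi (T u) ≤ cdf phi (T v) := by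
      rw [hΦT u, hΦT v]
      exact (strictMono_cdf hρc hρpos h1).monotone huv
    exact ((strictMono_cdf continuous_phi phi_pos integrable_phi).le_iff_le).mp h2
  have hlogf : ∀ x, Real.log (f x) = x^2/2 - (T x)^2/2 + Real.log (T' x) := by
    intro x
    have h2 : Real.log (phi (T x) * T' x) = Real.log (f x * phi x) := by rw [hMA x]
    rw [Real.log_mul (phi_pos _).ne' (hT'pos x).ne',
      Real.log_mul (hpos x).ne' (phi_pos x).ne', log_phi (T x), log_phi x] at h2
    linarith
  -- the pointwise key inequality
  set G : ℝ → ℝ := fun x => (T x - x) * (f x * phi x) with hGdef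
  set G' : ℝ → ℝ := fun x => (T' x - 1) * (f x * phi x)
    + (T x - x) * ((deriv f x - x * f x) * phi x) with hG'def
  have hkey : ∀ x, f x * Real.log (f x) * phi x ≤ G' x + 1/2 * (deriv f x ^ 2 / f x * phi x) := by
    intro x
    have hfne : f x ≠ 0 := (hpos x).ne'
    have hid : G' x + 1/2 * (deriv f x ^ 2 / f x * phi x)
        - (f x * (x^2/2 - (T x)^2/2 + (T' x - 1))) * phi x
        = 1/2 * (phi x / f x) * (f x * (T x - x) + deriv f x)^2 := by
      rw [hG'def, hT'def]
      field_simp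
      ring
    have hsq : 0 ≤ 1/2 * (phi x / f x) * (f x * (T x - x) + deriv f x)^2 :=
      mul_nonneg (mul_nonneg (by norm_num) (div_nonneg (phi_pos x).le (hpos x).le))
        (sq_nonneg _)
    have hstep : f x * Real.log (f x) * phi x
        ≤ (f x * (x^2/2 - (T x)^2/2 + (T' x - 1))) * phi x := by
      rw [hlogf x]
      have hlog' : Real.log (T' x) ≤ T' x - 1 := Real.log_le_sub_one_of_pos (hT'pos x)
      have := mul_le_mul_of_nonneg_right
        (mul_le_mul_of_nonneg_left (by linarith : x^2/2 - (T x)^2/2 + Real.log (T' x)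
          ≤ x^2/2 - (T x)^2/2 + (T' x - 1)) (hpos x).le) (phi_pos x).le
      exact this
    linarith
  have hρd : ∀ x, HasDerivAt (fun x => f x * phi x) ((deriv f x - x * f x) * phi x) x := by
    intro x
    have := (hd x).mul (hasDerivAt_phi x)
    exact this.congr_deriv (by ring)
  have hGd : ∀ x, HasDerivAt G (G' x) x := by
    intro x
    have h := ((hTd x).sub (hasDerivAt_id x)).mul (hρd x)
    exact h.congr_deriv rfl
  have hG'cont : Continuous G' := by
    rw [hG'def]
    exact ((hT'cont.sub continuous_const).mul hρc).add ((hTcont.sub continuous_id).mul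
      (((hcontf'.sub (continuous_id.mul hcontf)).mul continuous_phi)))
  have hfgcont : Continuous (fun x => f x * Real.log (f x) * phi x) :=
    (hcontf.mul (hcontf.log fun x => (hpos x).ne')).mul continuous_phi
  have hfishcont : Continuous (fun x => deriv f x ^ 2 / f x * phi x) :=
    (((hcontf'.pow 2).div hcontf fun x => (hpos x).ne').mul continuous_phi)
  -- interval inequality
  have hinterval : ∀ a b : ℝ, a ≤ b →
      (∫ x in a..b, f x * Real.log (f x) * phi x)
        ≤ (G b - G a) + 1/2 * ∫ x in a..b, deriv f x ^ 2 / f x * phi x := by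
    intro a b hab
    have h2 : (∫ x in a..b, G' x) = G b - G a :=
      intervalIntegral.integral_eq_sub_of_hasDerivAt (fun x _ => hGd x)
        (hG'cont.intervalIntegrable a b)
    have hii1 : IntervalIntegrable (fun x => f x * Real.log (f x) * phi x) volume a b :=
      hfgcont.intervalIntegrable a b
    have hii2 : IntervalIntegrable (fun x => G' x + 1/2 * (deriv f x ^ 2 / f x * phi x))
        volume a b := (hG'cont.add (continuous_const.mul hfishcont)).intervalIntegrable a b
    have hmono := intervalIntegral.integral_mono_on hab hii1 hii2 (fun x _ => hkey x)
    have h3 : (∫ x in a..b, (G' x + 1/2 * (deriv f x ^ 2 / f x * phi x)))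
        = (∫ x in a..b, G' x) + 1/2 * ∫ x in a..b, deriv f x ^ 2 / f x * phi x := by
      rw [intervalIntegral.integral_add (g := fun x => 1/2 * (deriv f x ^ 2 / f x * phi x))
        (hG'cont.intervalIntegrable a b)
        ((continuous_const.mul hfishcont).intervalIntegrable a b),
        intervalIntegral.integral_const_mul]
    calc (∫ x in a..b, f x * Real.log (f x) * phi x)
        ≤ ∫ x in a..b, (G' x + 1/2 * (deriv f x ^ 2 / f x * phi x)) := hmono
      _ = (G b - G a) + 1/2 * ∫ x in a..b, deriv f x ^ 2 / f x * phi x := by rw [h3, h2]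
  -- integrability of T^2 * ρ
  have hTsqcont : Continuous (fun x => (T x)^2 * (f x * phi x)) := (hTcont.pow 2).mul hρc
  have hcv : ∀ a b : ℝ, (∫ x in a..b, (T x)^2 * (f x * phi x))
      = ∫ y in (T a)..(T b), y^2 * phi y := by
    intro a b
    have h2 := intervalIntegral.integral_comp_mul_deriv (g := fun y => y^2 * phi y)
      (fun x (_ : x ∈ uIcc a b) => hTd x)
      hT'cont.continuousOn ((continuous_pow 2).mul continuous_phi)
    rw [← h2]
    refine intervalIntegral.integral_congr fun x _ => ?_
    show (T x)^2 * (f x * phi x) = ((fun y => y^2 * phi y) ∘ T) x * T' x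
    simp only [Function.comp]
    rw [← hMA x]; ring
  set M : ℝ := ∫ y, y^2 * phi y with hMdef
  have hboundM : ∀ a b : ℝ, a ≤ b → (∫ x in a..b, (T x)^2 * (f x * phi x)) ≤ M := by
    intro a b hab
    rw [hcv a b, intervalIntegral.integral_of_le (hTmono hab)]
    have : (∫ y in Ioc (T a) (T b), y^2 * phi y) ≤ ∫ y, y^2 * phi y :=
      setIntegral_le_integral integrable_sq_mul_phi
        (Eventually.of_forall fun y => mul_nonneg (sq_nonneg y) (phi_pos y).le)
    exact this
  have hTsq : Integrable (fun x => (T x)^2 * (f x * phi x)) := by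
    have hfi : ∀ n : ℕ, IntegrableOn (fun x => T x ^ 2 * (f x * phi x))
        (Ioc (-(n:ℝ)) ((n:ℝ))) volume := fun n => hTsqcont.integrableOn_Ioc
    refine integrable_of_intervalIntegral_norm_bounded (μ := volume)
      (a := fun n : ℕ => -(n:ℝ)) (b := fun n : ℕ => (n:ℝ)) M hfi
      (tendsto_neg_atTop_atBot.comp tendsto_natCast_atTop_atTop)
      tendsto_natCast_atTop_atTop ?_
    refine Eventually.of_forall fun n => ?_
    have he : (∫ x in (-(n:ℝ))..(n:ℝ), ‖(T x)^2 * (f x * phi x)‖)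
        = ∫ x in (-(n:ℝ))..(n:ℝ), (T x)^2 * (f x * phi x) := by
      refine intervalIntegral.integral_congr fun x _ => ?_
      rw [Real.norm_eq_abs, abs_of_nonneg (mul_nonneg (sq_nonneg _) (hρpos x).le)]
    rw [he]
    exact hboundM _ _ (by
      have : (0:ℝ) ≤ (n:ℝ) := Nat.cast_nonneg n
      linarith)
  -- dominating function
  have habsxρ : Integrable (fun x => |x| * (f x * phi x)) := by
    refine hxρ.abs.congr (Eventually.of_forall fun x => ?_)
    show |x * (f x * phi x)| = |x| * (f x * phi x)
    rw [abs_mul, abs_of_nonneg (hρpos x).le]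
  have hTabs : Integrable (fun x => |T x| * (f x * phi x)) := by
    have hbnd : Integrable (fun x => 1/2 * ((f x * phi x) + (T x)^2 * (f x * phi x))) := by
      have hsum : Integrable (fun x => (f x * phi x) + (T x)^2 * (f x * phi x)) := h1.add hTsq
      exact hsum.const_mul (1/2)
    refine hbnd.mono' ((hTcont.abs.mul hρc)).aestronglyMeasurable
      (Eventually.of_forall fun x => ?_)
    rw [Real.norm_eq_abs, abs_of_nonneg (mul_nonneg (abs_nonneg _) (hρpos x).le)]
    nlinarith [sq_nonneg (|T x| - 1), hρpos x, sq_abs (T x),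
      mul_le_mul_of_nonneg_right (show |T x| ≤ (1 + (T x)^2)/2 by nlinarith [sq_nonneg (|T x| - 1), sq_abs (T x)]) (hρpos x).le]
  have hdomint : Integrable (fun x => (1 + |x| + |T x|) * (f x * phi x)) := by
    have hsum : Integrable (fun x => (f x * phi x) + |x| * (f x * phi x)
        + |T x| * (f x * phi x)) := (h1.add habsxρ).add hTabs
    refine hsum.congr (Eventually.of_forall fun x => by ring)
  have hGbound : ∀ x, ‖G x‖ ≤ (1 + |x| + |T x|) * (f x * phi x) := by
    intro x
    have hGx : G x = (T x - x) * (f x * phi x) := rfl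
    rw [Real.norm_eq_abs, hGx, abs_mul, abs_of_nonneg (hρpos x).le]
    have h2 : |T x - x| ≤ |T x| + |x| := by
      rw [sub_eq_add_neg]
      exact (abs_add_le _ _).trans (by rw [abs_neg])
    have h3 : |T x| + |x| ≤ 1 + |x| + |T x| := by linarith
    exact mul_le_mul_of_nonneg_right (h2.trans h3) (hρpos x).le
  -- sequences
  obtain ⟨b, hbtop, hb0⟩ := exists_seq_tendsto_atTop
    (fun x => mul_nonneg (by positivity) (hρpos x).le) hdomint
  obtain ⟨a, habot, ha0⟩ := exists_seq_tendsto_atBot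
    (fun x => mul_nonneg (by positivity) (hρpos x).le) hdomint
  have hGb : Tendsto (fun n => G (b n)) atTop (𝓝 0) :=
    squeeze_zero_norm (fun n => hGbound (b n)) hb0
  have hGa : Tendsto (fun n => G (a n)) atTop (𝓝 0) :=
    squeeze_zero_norm (fun n => hGbound (a n)) ha0
  have hab_ev : ∀ᶠ n in atTop, a n ≤ b n := by
    filter_upwards [habot.eventually (eventually_le_atBot 0),
      hbtop.eventually (eventually_ge_atTop 0)] with n h1n h2n
    linarith
  have hEnt_t : Tendsto (fun n => ∫ x in a n..b n, f x * Real.log (f x) * phi x) atTop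
      (𝓝 (∫ x, f x * Real.log (f x) * phi x)) :=
    intervalIntegral_tendsto_integral hent habot hbtop
  have hFish_t : Tendsto (fun n => ∫ x in a n..b n, deriv f x ^ 2 / f x * phi x) atTop
      (𝓝 (∫ x, deriv f x ^ 2 / f x * phi x)) :=
    intervalIntegral_tendsto_integral hfisher habot hbtop
  have hRHS_t : Tendsto (fun n => (G (b n) - G (a n))
      + 1/2 * ∫ x in a n..b n, deriv f x ^ 2 / f x * phi x) atTop
      (𝓝 ((0 - 0) + 1/2 * ∫ x, deriv f x ^ 2 / f x * phi x)) :=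
    (hGb.sub hGa).add (hFish_t.const_mul (1/2))
  have := le_of_tendsto_of_tendsto hEnt_t hRHS_t
    (hab_ev.mono fun n hn => hinterval (a n) (b n) hn)
  simpa using this


end GLSI

open MeasureTheory ProbabilityTheory

/-- One-dimensional Gaussian logarithmic Sobolev inequality together with its reverse bound:
for the standard Gaussian `μ = N(0,1)` on `ℝ` and any smooth positive `f` with `∫ f dμ = 1`,
`(1/2)(∫ f' dμ)² ≤ ∫ f ln f dμ ≤ (1/2) ∫ (f')²/f dμ`. -/
theorem gaussian_lsi_with_reverse_one_dim (f : ℝ → ℝ)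
    (hsmooth : ContDiff ℝ (⊤ : ℕ∞) f) (hpos : ∀ x, 0 < f x)
    (hnorm : (∫ x, f x ∂(gaussianReal 0 1)) = 1)
    (hent : Integrable (fun x => f x * Real.log (f x)) (gaussianReal 0 1))
    (hderiv : Integrable (deriv f) (gaussianReal 0 1))
    (hfisher : Integrable (fun x => (deriv f x) ^ 2 / f x) (gaussianReal 0 1)) :
    (1 / 2) * (∫ x, deriv f x ∂(gaussianReal 0 1)) ^ 2
      ≤ ∫ x, f x * Real.log (f x) ∂(gaussianReal 0 1)
    ∧ (∫ x, f x * Real.log (f x) ∂(gaussianReal 0 1))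
      ≤ (1 / 2) * ∫ x, (deriv f x) ^ 2 / f x ∂(gaussianReal 0 1) := by
  have hIntf : Integrable f (gaussianReal 0 1) := by
    by_contra h
    rw [MeasureTheory.integral_undef h] at hnorm
    norm_num at hnorm
  have h1 : Integrable (fun x => f x * GLSI.phi x) := (GLSI.integrable_mu_iff f).mp hIntf
  have hone : (∫ x, f x * GLSI.phi x) = 1 := by
    rw [← GLSI.integral_mu_eq]; exact hnorm
  have hentv : Integrable (fun x => f x * Real.log (f x) * GLSI.phi x) :=
    (GLSI.integrable_mu_iff _).mp hent
  have hderivv : Integrable (fun x => deriv f x * GLSI.phi x) :=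
    (GLSI.integrable_mu_iff _).mp hderiv
  have hfishv : Integrable (fun x => deriv f x ^ 2 / f x * GLSI.phi x) :=
    (GLSI.integrable_mu_iff _).mp hfisher
  have hd : ∀ x, HasDerivAt f (deriv f x) x := fun x =>
    ((hsmooth.differentiable (by simp)) x).hasDerivAt
  have hcontf' : Continuous (deriv f) := hsmooth.continuous_deriv (by simp)
  obtain ⟨hxrho, hm, hlow⟩ := GLSI.lower_main hd hpos h1 hone hentv hderivv
  have hup := GLSI.upper_main hd hcontf' hpos h1 hone hentv hxrho hfishv
  constructor
  · rw [GLSI.integral_mu_eq (deriv f), GLSI.integral_mu_eq (fun x => f x * Real.log (f x))]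
    exact hlow
  · rw [GLSI.integral_mu_eq (fun x => f x * Real.log (f x)),
      GLSI.integral_mu_eq (fun x => deriv f x ^ 2 / f x)]
    exact hup
end

section
/- Optimality of the squared-conditional-expectation profile for Hellinger: with dπ = ℓ dμ, ∫ℓ dμ = 1, and orthonormal U_r, among measures dν ∝ g(U_r^T x) dμ(x), the squared Hellinger distance d_H²(π, ν) is minimized by g(θ) = (E_{X∼μ}[√ℓ(X) | U_r^T X = θ])². -/
open Matrix MeasureTheory

/-!
Expanding the square, `∫ (√ℓ - √q)² = ∫ ℓ + ∫ q - 2 ∫ √ℓ √q`, so among probability densities `q`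
the Hellinger distance is governed by the affinity `∫ √ℓ √q`. For `q = h / ∫ h` with `h`
measurable for `σ(Uᵀ x)`, the pull-out property turns the affinity into
`∫ E[√ℓ | σ(Uᵀ x)] √h / √(∫ h)`, which by Cauchy–Schwarz is at most `‖E[√ℓ | σ(Uᵀ x)]‖₂`;
the profile `h = E[√ℓ | σ(Uᵀ x)]²` attains this bound.
-/

section Hellinger

variable {α : Type*} {m m₀ : MeasurableSpace α} {μ : Measure α}

theorem integral_sqrt_sub_sqrt_sq {a b : α → ℝ} (ha : 0 ≤ a) (hb : 0 ≤ b)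
    (hai : Integrable a μ) (hbi : Integrable b μ)
    (hsq : Integrable (fun x => (√(a x) - √(b x)) ^ 2) μ) :
    ∫ x, (√(a x) - √(b x)) ^ 2 ∂μ
      = ∫ x, a x ∂μ + ∫ x, b x ∂μ - 2 * ∫ x, √(a x) * √(b x) ∂μ := by
  have expand : ∀ x, (√(a x) - √(b x)) ^ 2 = a x + b x - 2 * (√(a x) * √(b x)) := fun x => by
    rw [sub_sq, Real.sq_sqrt (ha x), Real.sq_sqrt (hb x)]; ring
  have hcross : Integrable (fun x => 2 * (√(a x) * √(b x))) μ := by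
    simp_rw [show ∀ x, 2 * (√(a x) * √(b x)) = a x + b x - (√(a x) - √(b x)) ^ 2 by
      intro x; rw [expand]; ring]
    exact (hai.add hbi).sub hsq
  simp_rw [expand]
  rw [integral_sub (f := fun x => a x + b x) (hai.add hbi) hcross, integral_add hai hbi,
    integral_const_mul]

theorem integral_mul_le_sqrt_integral_sq_mul_sqrt_integral_sq {f g : α → ℝ}
    (hf₀ : 0 ≤ᵐ[μ] f) (hg₀ : 0 ≤ᵐ[μ] g) (hf : MemLp f 2 μ) (hg : MemLp g 2 μ) :
    ∫ x, f x * g x ∂μ ≤ √(∫ x, f x ^ 2 ∂μ) * √(∫ x, g x ^ 2 ∂μ) := by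
  have h := integral_mul_le_Lp_mul_Lq_of_nonneg (p := 2) (q := 2) Real.HolderConjugate.two_two
    hf₀ hg₀ (by simpa using hf) (by simpa using hg)
  simpa only [Real.rpow_two, Real.sqrt_eq_rpow] using h

theorem integral_mul_condExp_of_stronglyMeasurable (hm : m ≤ m₀) [SigmaFinite (μ.trim hm)]
    {φ f : α → ℝ} (hφ : StronglyMeasurable[m] φ) (hφf : Integrable (φ * f) μ)
    (hf : Integrable f μ) :
    ∫ x, φ x * μ[f | m] x ∂μ = ∫ x, φ x * f x ∂μ := by
  calc ∫ x, φ x * μ[f | m] x ∂μ = ∫ x, μ[φ * f | m] x ∂μ :=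
        integral_congr_ae (condExp_mul_of_stronglyMeasurable_left hφ hφf hf).symm
    _ = ∫ x, φ x * f x ∂μ := integral_condExp hm

variable [IsFiniteMeasure μ]

theorem integral_mul_sqrt_div_integral_le_sqrt_integral_condExp_sq (hm : m ≤ m₀) {f h : α → ℝ}
    (hf₀ : 0 ≤ᵐ[μ] f) (hf : MemLp f 2 μ) (hh₀ : 0 ≤ h) (hhm : StronglyMeasurable[m] h)
    (hhi : Integrable h μ) :
    ∫ x, f x * √(h x / ∫ y, h y ∂μ) ∂μ ≤ √(∫ x, μ[f | m] x ^ 2 ∂μ) := by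
  have hsqrt_hm : StronglyMeasurable[m] fun x => √(h x) :=
    Real.continuous_sqrt.comp_stronglyMeasurable hhm
  have hsqrt_h : MemLp (fun x => √(h x)) 2 μ := by
    refine (memLp_two_iff_integrable_sq (hsqrt_hm.mono hm).aestronglyMeasurable).2 ?_
    simpa only [Real.sq_sqrt (hh₀ _)] using hhi
  have cauchy_schwarz := integral_mul_le_sqrt_integral_sq_mul_sqrt_integral_sq
    (ae_of_all _ fun x => Real.sqrt_nonneg (h x)) (condExp_nonneg (m := m) hf₀) hsqrt_h
    (hf.condExp one_le_two)
  simp only [Real.sq_sqrt (hh₀ _)] at cauchy_schwarz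
  calc ∫ x, f x * √(h x / ∫ y, h y ∂μ) ∂μ = (∫ x, √(h x) * f x ∂μ) / √(∫ y, h y ∂μ) := by
        simp_rw [Real.sqrt_div (hh₀ _), ← integral_div, mul_div_assoc', mul_comm]
    _ = (∫ x, √(h x) * μ[f | m] x ∂μ) / √(∫ y, h y ∂μ) := by
        rw [integral_mul_condExp_of_stronglyMeasurable hm hsqrt_hm
          (hsqrt_h.integrable_mul hf) (hf.integrable one_le_two)]
    _ ≤ √(∫ x, μ[f | m] x ^ 2 ∂μ) :=
        div_le_of_le_mul₀ (Real.sqrt_nonneg _) (Real.sqrt_nonneg _) (by linarith)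

theorem integral_mul_sqrt_condExp_sq_div_integral (hm : m ≤ m₀) {f : α → ℝ}
    (hf₀ : 0 ≤ᵐ[μ] f) (hf : MemLp f 2 μ) :
    ∫ x, f x * √(μ[f | m] x ^ 2 / ∫ y, μ[f | m] y ^ 2 ∂μ) ∂μ = √(∫ x, μ[f | m] x ^ 2 ∂μ) := by
  have hF := hf.condExp (m := m) one_le_two
  have hpull : ∫ x, μ[f | m] x * f x ∂μ = ∫ x, μ[f | m] x ^ 2 ∂μ := by
    simp_rw [sq]
    exact (integral_mul_condExp_of_stronglyMeasurable hm stronglyMeasurable_condExp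
      (hF.integrable_mul hf) (hf.integrable one_le_two)).symm
  calc ∫ x, f x * √(μ[f | m] x ^ 2 / ∫ y, μ[f | m] y ^ 2 ∂μ) ∂μ
      = ∫ x, μ[f | m] x * f x / √(∫ y, μ[f | m] y ^ 2 ∂μ) ∂μ := by
        refine integral_congr_ae ?_
        filter_upwards [condExp_nonneg (m := m) hf₀] with x hx
        rw [Real.sqrt_div (sq_nonneg _), Real.sqrt_sq hx]
        ring
    _ = √(∫ x, μ[f | m] x ^ 2 ∂μ) := by rw [integral_div, hpull, Real.div_sqrt]

end Hellinger

theorem hellinger_profile_optimality_general (d r : ℕ)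
    (μ : Measure (Fin d → ℝ)) [IsProbabilityMeasure μ]
    (Ur : Matrix (Fin d) (Fin r) ℝ)
    (ℓ : (Fin d → ℝ) → ℝ) (hℓpos : ∀ x, 0 ≤ ℓ x)
    (hℓint : Integrable ℓ μ)
    (g : (Fin r → ℝ) → ℝ) (hgmeas : Measurable g) (hgpos : ∀ θ, 0 ≤ g θ)
    (hgint : Integrable (fun x => g (Urᵀ *ᵥ x)) μ)
    (hZ : 0 < ∫ x, g (Urᵀ *ᵥ x) ∂μ)
    (F : (Fin d → ℝ) → ℝ)
    (hF : F = μ[(fun x => Real.sqrt (ℓ x)) |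
      MeasurableSpace.comap (fun x => Urᵀ *ᵥ x) inferInstance])
    (hint1 : Integrable (fun x =>
      (Real.sqrt (ℓ x) - Real.sqrt ((F x) ^ 2 / (∫ y, (F y) ^ 2 ∂μ))) ^ 2) μ)
    (hint2 : Integrable (fun x =>
      (Real.sqrt (ℓ x) - Real.sqrt (g (Urᵀ *ᵥ x) / (∫ y, g (Urᵀ *ᵥ y) ∂μ))) ^ 2) μ) :
    (1 / 2) * (∫ x, (Real.sqrt (ℓ x)
        - Real.sqrt ((F x) ^ 2 / (∫ y, (F y) ^ 2 ∂μ))) ^ 2 ∂μ)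
      ≤ (1 / 2) * ∫ x, (Real.sqrt (ℓ x)
        - Real.sqrt (g (Urᵀ *ᵥ x) / (∫ y, g (Urᵀ *ᵥ y) ∂μ))) ^ 2 ∂μ := by
  subst hF
  have hT : Measurable fun x : Fin d → ℝ => Urᵀ *ᵥ x :=
    (continuous_const.matrix_mulVec continuous_id).measurable
  have hm := hT.comap_le
  have hf₀ : 0 ≤ᵐ[μ] fun x => √(ℓ x) := ae_of_all _ fun x => Real.sqrt_nonneg _
  have hf : MemLp (fun x => √(ℓ x)) 2 μ := by
    refine (memLp_two_iff_integrable_sq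
      (Real.continuous_sqrt.comp_aestronglyMeasurable hℓint.1)).2 ?_
    simpa only [Real.sq_sqrt (hℓpos _)] using hℓint
  rw [integral_sqrt_sub_sqrt_sq hℓpos (fun x => div_nonneg (sq_nonneg _)
        (integral_nonneg fun _ => sq_nonneg _)) hℓint
        ((hf.condExp one_le_two).integrable_sq.div_const _) hint1,
    integral_sqrt_sub_sqrt_sq hℓpos (fun x => div_nonneg (hgpos _) hZ.le) hℓint
        (hgint.div_const _) hint2,
    integral_mul_sqrt_condExp_sq_div_integral hm hf₀ hf, integral_div, integral_div,
    div_self hZ.ne']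
  have affinity_le := integral_mul_sqrt_div_integral_le_sqrt_integral_condExp_sq hm hf₀ hf
    (fun x => hgpos _) (hgmeas.comp (comap_measurable _)).stronglyMeasurable hgint
  -- `≤ 1` rather than `= 1`: the normalisation `F² / ∫ F²` is `0` when `F = 0` a.e.
  linarith [div_self_le_one (∫ x, μ[fun x => √(ℓ x) |
    MeasurableSpace.comap (fun x => Urᵀ *ᵥ x) inferInstance] x ^ 2 ∂μ)]

/-- Optimality of the squared-conditional-expectation profile for the squared Hellinger
distance: with `dπ = ℓ dμ`, `∫ℓ dμ = 1`, `T x = U_rᵀ x`, and `F = E_μ[√ℓ | σ(T)]`, the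
squared Hellinger distance from `π` to the normalized measure with profile `F²` is no
larger than that to any normalized measure `dν ∝ g(U_rᵀ x) dμ(x)`. -/
theorem hellinger_profile_optimality (d r : ℕ)
    (μ : Measure (Fin d → ℝ)) [IsProbabilityMeasure μ]
    (Ur : Matrix (Fin d) (Fin r) ℝ) (hUr : Urᵀ * Ur = 1)
    (ℓ : (Fin d → ℝ) → ℝ) (hmeas : Measurable ℓ) (hℓpos : ∀ x, 0 ≤ ℓ x)
    (hℓint : Integrable ℓ μ) (hnorm : (∫ x, ℓ x ∂μ) = 1)
    (g : (Fin r → ℝ) → ℝ) (hgmeas : Measurable g) (hgpos : ∀ θ, 0 ≤ g θ)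
    (hgint : Integrable (fun x => g (Urᵀ *ᵥ x)) μ)
    (hZ : 0 < ∫ x, g (Urᵀ *ᵥ x) ∂μ)
    (F : (Fin d → ℝ) → ℝ)
    (hF : F = μ[(fun x => Real.sqrt (ℓ x)) |
      MeasurableSpace.comap (fun x => Urᵀ *ᵥ x) inferInstance])
    (hF2int : Integrable (fun x => (F x) ^ 2) μ)
    (hint1 : Integrable (fun x =>
      (Real.sqrt (ℓ x) - Real.sqrt ((F x) ^ 2 / (∫ y, (F y) ^ 2 ∂μ))) ^ 2) μ)
    (hint2 : Integrable (fun x =>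
      (Real.sqrt (ℓ x) - Real.sqrt (g (Urᵀ *ᵥ x) / (∫ y, g (Urᵀ *ᵥ y) ∂μ))) ^ 2) μ) :
    (1 / 2) * (∫ x, (Real.sqrt (ℓ x)
        - Real.sqrt ((F x) ^ 2 / (∫ y, (F y) ^ 2 ∂μ))) ^ 2 ∂μ)
      ≤ (1 / 2) * ∫ x, (Real.sqrt (ℓ x)
        - Real.sqrt (g (Urᵀ *ᵥ x) / (∫ y, g (Urᵀ *ᵥ y) ∂μ))) ^ 2 ∂μ :=
  hellinger_profile_optimality_general d r μ Ur ℓ hℓpos hℓint g hgmeas hgpos hgint hZ F hF hint1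
    hint2
end
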